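/- arXiv:1706.05298 — 2 statements merged into one kernel-verified Lean document; each statement's English description precedes it below -/
import Mathlib

section
/- Under the same hypotheses, using the multiplier (T - t)u_j one obtains the 'hidden regularity' estimate ‖u^0‖_{L^2}^2 ≤ (1/T)‖u‖_{L^2(0,T;L^2)}^2 + 3(α - N/2)‖u_1(·,0)‖_{L^2(0,T)}^2 + Σ_j ‖∂_x u_j(·,0)‖_{L^2(0,T)}^2 + (α - N/2)^{-1}‖g‖_{L^2(0,T)}^2, where ‖u‖_{L^2(0,T;L^2)}^2 = ∫_0^T Σ_j ∫_0^{ℓ_j} |u_j|^2 dx dt. -/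
open scoped BigOperators
open MeasureTheory intervalIntegral Real Set

noncomputable def pdx (F : ℝ × ℝ → ℝ) : ℝ × ℝ → ℝ := fun p => fderiv ℝ F p (0, 1)
noncomputable def pdt (F : ℝ × ℝ → ℝ) : ℝ × ℝ → ℝ := fun p => fderiv ℝ F p (1, 0)

lemma pdx_contDiff {F : ℝ × ℝ → ℝ} (hF : ContDiff ℝ (⊤ : ℕ∞) F) : ContDiff ℝ (⊤ : ℕ∞) (pdx F) :=
  (hF.fderiv_right (by simp)).clm_apply contDiff_const

lemma pdt_contDiff {F : ℝ × ℝ → ℝ} (hF : ContDiff ℝ (⊤ : ℕ∞) F) : ContDiff ℝ (⊤ : ℕ∞) (pdt F) :=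
  (hF.fderiv_right (by simp)).clm_apply contDiff_const

lemma hasDerivAt_slice_x {F : ℝ × ℝ → ℝ} (hF : ContDiff ℝ (⊤ : ℕ∞) F) (t x : ℝ) :
    HasDerivAt (fun y => F (t, y)) (pdx F (t, x)) x := by
  have h1 : HasFDerivAt F (fderiv ℝ F (t, x)) (t, x) :=
    (hF.differentiable (by simp) (t, x)).hasFDerivAt
  have h2 : HasDerivAt (fun y : ℝ => ((t, y) : ℝ × ℝ)) ((0 : ℝ), (1 : ℝ)) x :=
    (hasDerivAt_const x t).prodMk (hasDerivAt_id x)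
  exact h1.comp_hasDerivAt x h2

lemma hasDerivAt_slice_t {F : ℝ × ℝ → ℝ} (hF : ContDiff ℝ (⊤ : ℕ∞) F) (t x : ℝ) :
    HasDerivAt (fun s => F (s, x)) (pdt F (t, x)) t := by
  have h1 : HasFDerivAt F (fderiv ℝ F (t, x)) (t, x) :=
    (hF.differentiable (by simp) (t, x)).hasFDerivAt
  have h2 : HasDerivAt (fun s : ℝ => ((s, x) : ℝ × ℝ)) ((1 : ℝ), (0 : ℝ)) t :=
    (hasDerivAt_id t).prodMk (hasDerivAt_const t x)
  exact h1.comp_hasDerivAt t h2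

lemma deriv_slice_x {F : ℝ × ℝ → ℝ} (hF : ContDiff ℝ (⊤ : ℕ∞) F) (t x : ℝ) :
    deriv (fun y => F (t, y)) x = pdx F (t, x) :=
  (hasDerivAt_slice_x hF t x).deriv

lemma iteratedDeriv_two_slice {F : ℝ × ℝ → ℝ} (hF : ContDiff ℝ (⊤ : ℕ∞) F) (t x : ℝ) :
    iteratedDeriv 2 (fun y => F (t, y)) x = pdx (pdx F) (t, x) := by
  have h1 : deriv (fun y => F (t, y)) = fun y => pdx F (t, y) :=
    funext fun y => deriv_slice_x hF t y
  simp only [iteratedDeriv_succ, iteratedDeriv_zero]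
  rw [h1]
  exact deriv_slice_x (pdx_contDiff hF) t x

lemma iteratedDeriv_three_slice {F : ℝ × ℝ → ℝ} (hF : ContDiff ℝ (⊤ : ℕ∞) F) (t x : ℝ) :
    iteratedDeriv 3 (fun y => F (t, y)) x = pdx (pdx (pdx F)) (t, x) := by
  have h1 : deriv (fun y => F (t, y)) = fun y => pdx F (t, y) :=
    funext fun y => deriv_slice_x hF t y
  have h2 : deriv (fun y => pdx F (t, y)) = fun y => pdx (pdx F) (t, y) :=
    funext fun y => deriv_slice_x (pdx_contDiff hF) t y
  simp only [iteratedDeriv_succ, iteratedDeriv_zero]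
  rw [h1, h2]
  exact deriv_slice_x (pdx_contDiff (pdx_contDiff hF)) t x

lemma swapInt {f : ℝ × ℝ → ℝ} (hf : Continuous f) {b d : ℝ} (hb : 0 ≤ b) (hd : 0 ≤ d) :
    ∫ s in (0:ℝ)..b, ∫ x in (0:ℝ)..d, f (s, x) = ∫ x in (0:ℝ)..d, ∫ s in (0:ℝ)..b, f (s, x) := by
  simp only [intervalIntegral.integral_of_le hb, intervalIntegral.integral_of_le hd]
  have hint : Integrable (Function.uncurry fun s x => f (s, x))
      ((volume.restrict (Ioc (0:ℝ) b)).prod (volume.restrict (Ioc (0:ℝ) d))) := by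
    rw [Measure.prod_restrict]
    have h1 : IntegrableOn f (Icc (0:ℝ) b ×ˢ Icc (0:ℝ) d) (volume.prod volume) := by
      rw [← Measure.volume_eq_prod]
      exact hf.continuousOn.integrableOn_compact (isCompact_Icc.prod isCompact_Icc)
    exact (h1.mono_set (Set.prod_mono Ioc_subset_Icc_self Ioc_subset_Icc_self))
  exact MeasureTheory.integral_integral_swap hint

lemma edge_identity (F : ℝ × ℝ → ℝ) (hF : ContDiff ℝ (⊤ : ℕ∞) F) (T L : ℝ) (hL : 0 < L)
    (hpde : ∀ t ∈ Icc (0:ℝ) T, ∀ x ∈ Icc (0:ℝ) L,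
      pdt F (t, x) + pdx F (t, x) + pdx (pdx (pdx F)) (t, x) = 0)
    (hbd : ∀ t ∈ Icc (0:ℝ) T, F (t, L) = 0 ∧ pdx F (t, L) = 0)
    (t : ℝ) (ht : t ∈ Icc (0:ℝ) T) :
    (∫ x in (0:ℝ)..L, (F (t, x))^2) - (∫ x in (0:ℝ)..L, (F (0, x))^2)
      = ∫ s in (0:ℝ)..t,
          ((F (s, 0))^2 + 2*(F (s, 0) * pdx (pdx F) (s, 0)) - (pdx F (s, 0))^2) := by
  have h0t : (0:ℝ) ≤ t := ht.1
  have hFc : Continuous F := hF.continuous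
  have hUx : Continuous (pdx F) := (pdx_contDiff hF).continuous
  have hUxxx : Continuous (pdx (pdx (pdx F))) :=
    (pdx_contDiff (pdx_contDiff (pdx_contDiff hF))).continuous
  have hUt : Continuous (pdt F) := (pdt_contDiff hF).continuous
  have hG : Continuous (fun p : ℝ × ℝ => 2 * F p * pdt F p) :=
    (continuous_const.mul hFc).mul hUt
  have hsx : ∀ s : ℝ, Continuous (fun x : ℝ => ((s, x) : ℝ × ℝ)) :=
    fun s => continuous_const.prodMk continuous_id
  have hst : ∀ x : ℝ, Continuous (fun s : ℝ => ((s, x) : ℝ × ℝ)) :=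
    fun x => continuous_id.prodMk continuous_const
  have tftc : ∀ x : ℝ, ∫ s in (0:ℝ)..t, 2 * F (s, x) * pdt F (s, x)
      = (F (t, x))^2 - (F (0, x))^2 := by
    intro x
    apply intervalIntegral.integral_eq_sub_of_hasDerivAt
    · intro s _
      have h := (hasDerivAt_slice_t hF s x).fun_pow 2
      exact h.congr_deriv (by push_cast; ring)
    · exact (hG.comp (hst x)).intervalIntegrable 0 t
  have xftc : ∀ s ∈ Icc (0:ℝ) T, ∫ x in (0:ℝ)..L, 2 * F (s, x) * pdt F (s, x)
      = (F (s, 0))^2 + 2*(F (s, 0) * pdx (pdx F) (s, 0)) - (pdx F (s, 0))^2 := by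
    intro s hs
    have hEq : EqOn (fun x => 2 * F (s, x) * pdt F (s, x))
        (fun x => -(2 * F (s, x) * pdx F (s, x) + 2 * F (s, x) * pdx (pdx (pdx F)) (s, x)))
        (uIcc (0:ℝ) L) := by
      intro x hx
      rw [uIcc_of_le hL.le] at hx
      have hp := hpde s hs x hx
      have hpt : pdt F (s, x) = -(pdx F (s, x)) - pdx (pdx (pdx F)) (s, x) := by linarith
      simp only
      rw [hpt]; ring
    rw [intervalIntegral.integral_congr hEq]
    have hB : ∀ x : ℝ, HasDerivAt
        (fun y => (F (s, y))^2 + 2*(F (s, y) * pdx (pdx F) (s, y)) - (pdx F (s, y))^2)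
        (2 * F (s, x) * pdx F (s, x) + 2 * F (s, x) * pdx (pdx (pdx F)) (s, x)) x := by
      intro x
      have h1 := hasDerivAt_slice_x hF s x
      have h2 := hasDerivAt_slice_x (pdx_contDiff hF) s x
      have h3 := hasDerivAt_slice_x (pdx_contDiff (pdx_contDiff hF)) s x
      have e1 := h1.fun_pow 2
      have e2 := (h1.fun_mul h3).const_mul (2:ℝ)
      have e3 := h2.fun_pow 2
      have htot := (e1.fun_add e2).fun_sub e3
      exact htot.congr_deriv (by push_cast; ring)
    have hcontD : Continuous (fun x : ℝ =>
        2 * F (s, x) * pdx F (s, x) + 2 * F (s, x) * pdx (pdx (pdx F)) (s, x)) := by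
      have c1 : Continuous fun x : ℝ => F (s, x) := hFc.comp (hsx s)
      have c2 : Continuous fun x : ℝ => pdx F (s, x) := hUx.comp (hsx s)
      have c3 : Continuous fun x : ℝ => pdx (pdx (pdx F)) (s, x) := hUxxx.comp (hsx s)
      exact ((continuous_const.mul c1).mul c2).add ((continuous_const.mul c1).mul c3)
    rw [intervalIntegral.integral_neg,
      intervalIntegral.integral_eq_sub_of_hasDerivAt (fun x _ => hB x)
        (hcontD.intervalIntegrable 0 L)]
    obtain ⟨hb1, hb2⟩ := hbd s hs
    rw [hb1, hb2]
    ring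
  have int1 : IntervalIntegrable (fun x => (F (t, x))^2) volume 0 L :=
    (((hFc.comp (hsx t)).pow 2)).intervalIntegrable 0 L
  have int2 : IntervalIntegrable (fun x => (F (0, x))^2) volume 0 L :=
    (((hFc.comp (hsx 0)).pow 2)).intervalIntegrable 0 L
  calc (∫ x in (0:ℝ)..L, (F (t, x))^2) - (∫ x in (0:ℝ)..L, (F (0, x))^2)
      = ∫ x in (0:ℝ)..L, ((F (t, x))^2 - (F (0, x))^2) :=
        (intervalIntegral.integral_sub int1 int2).symm
    _ = ∫ x in (0:ℝ)..L, ∫ s in (0:ℝ)..t, 2 * F (s, x) * pdt F (s, x) :=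
        intervalIntegral.integral_congr (fun x _ => (tftc x).symm)
    _ = ∫ s in (0:ℝ)..t, ∫ x in (0:ℝ)..L, 2 * F (s, x) * pdt F (s, x) :=
        (swapInt hG h0t hL.le).symm
    _ = ∫ s in (0:ℝ)..t,
          ((F (s, 0))^2 + 2*(F (s, 0) * pdx (pdx F) (s, 0)) - (pdx F (s, 0))^2) := by
        apply intervalIntegral.integral_congr
        intro s hs
        rw [uIcc_of_le h0t] at hs
        exact xftc s ⟨hs.1, hs.2.trans ht.2⟩

lemma weight_lemma (Φ : ℝ → ℝ) (hΦ : Continuous Φ) (T : ℝ) :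
    ∫ t in (0:ℝ)..T, (∫ s in (0:ℝ)..t, Φ s) = ∫ t in (0:ℝ)..T, (T - t) * Φ t := by
  set H : ℝ → ℝ := fun t => ∫ s in (0:ℝ)..t, Φ s with hH
  have hHd : ∀ t : ℝ, HasDerivAt H (Φ t) t := fun t =>
    (hΦ.integral_hasStrictDerivAt 0 t).hasDerivAt
  have hHc : Continuous H := by
    rw [continuous_iff_continuousAt]
    exact fun t => (hHd t).continuousAt
  set K : ℝ → ℝ := fun r => (∫ t in (0:ℝ)..r, H t) - r * H r + ∫ t in (0:ℝ)..r, t * Φ t with hK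
  have hKd : ∀ r : ℝ, HasDerivAt K 0 r := by
    intro r
    have k1 : HasDerivAt (fun r => ∫ t in (0:ℝ)..r, H t) (H r) r :=
      (hHc.integral_hasStrictDerivAt 0 r).hasDerivAt
    have k2 : HasDerivAt (fun r : ℝ => r * H r) (1 * H r + r * Φ r) r :=
      (hasDerivAt_id r).mul (hHd r)
    have k3 : HasDerivAt (fun r => ∫ t in (0:ℝ)..r, t * Φ t) (r * Φ r) r :=
      (((continuous_id.mul hΦ)).integral_hasStrictDerivAt 0 r).hasDerivAt
    have htot := (k1.fun_sub k2).fun_add k3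
    exact htot.congr_deriv (by ring)
  have hK0 : K T = K 0 := by
    have hd0 : ∀ x : ℝ, deriv K x = 0 := fun x => (hKd x).deriv
    exact is_const_of_deriv_eq_zero (fun x => (hKd x).differentiableAt) hd0 T 0
  have hKzero : K 0 = 0 := by
    simp [hK, hH]
  have hmain : (∫ t in (0:ℝ)..T, H t) = T * H T - ∫ t in (0:ℝ)..T, t * Φ t := by
    have hh := hK0.trans hKzero
    simp only [hK] at hh
    linarith
  rw [hmain]
  have hr : ∫ t in (0:ℝ)..T, (T - t) * Φ t
      = (∫ t in (0:ℝ)..T, T * Φ t) - ∫ t in (0:ℝ)..T, t * Φ t := by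
    have i1 : IntervalIntegrable (fun t : ℝ => T * Φ t) volume 0 T :=
      (continuous_const.mul hΦ).intervalIntegrable 0 T
    have i2 : IntervalIntegrable (fun t : ℝ => t * Φ t) volume 0 T :=
      (continuous_id.mul hΦ).intervalIntegrable 0 T
    rw [← intervalIntegral.integral_sub i1 i2]
    apply intervalIntegral.integral_congr
    intro x _
    ring
  rw [hr, intervalIntegral.integral_const_mul]

noncomputable def UXof (u : ℝ → ℝ → ℝ) : ℝ × ℝ → ℝ := pdx (fun p => u p.1 p.2)
noncomputable def UXXof (u : ℝ → ℝ → ℝ) : ℝ × ℝ → ℝ := pdx (UXof u)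
noncomputable def UXXXof (u : ℝ → ℝ → ℝ) : ℝ × ℝ → ℝ := pdx (UXXof u)
noncomputable def UTof (u : ℝ → ℝ → ℝ) : ℝ × ℝ → ℝ := pdt (fun p => u p.1 p.2)
noncomputable def phiOf (u : ℝ → ℝ → ℝ) : ℝ → ℝ :=
  fun s => (u s 0)^2 + 2*(u s 0 * UXXof u (s, 0)) - (UXof u (s, 0))^2

lemma trans_deriv (u : ℝ → ℝ → ℝ) (hu : ContDiff ℝ (⊤ : ℕ∞) fun p : ℝ × ℝ => u p.1 p.2)
    (t x : ℝ) : deriv (u t) x = UXof u (t, x) :=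
  deriv_slice_x hu t x

lemma trans_it2 (u : ℝ → ℝ → ℝ) (hu : ContDiff ℝ (⊤ : ℕ∞) fun p : ℝ × ℝ => u p.1 p.2)
    (t x : ℝ) : iteratedDeriv 2 (u t) x = UXXof u (t, x) :=
  iteratedDeriv_two_slice hu t x

lemma trans_it3 (u : ℝ → ℝ → ℝ) (hu : ContDiff ℝ (⊤ : ℕ∞) fun p : ℝ × ℝ => u p.1 p.2)
    (t x : ℝ) : iteratedDeriv 3 (u t) x = UXXXof u (t, x) :=
  iteratedDeriv_three_slice hu t x

lemma trans_dt (u : ℝ → ℝ → ℝ) (hu : ContDiff ℝ (⊤ : ℕ∞) fun p : ℝ × ℝ => u p.1 p.2)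
    (t x : ℝ) : deriv (fun τ => u τ x) t = UTof u (t, x) :=
  (hasDerivAt_slice_t hu t x).deriv


lemma ptwise_bound (T t c a b S P : ℝ) (hT0 : 0 ≤ T) (ht0 : 0 ≤ t) (htT : t ≤ T)
    (hc : 0 < c) (hS : 0 ≤ S) (hP : P = 2*a*b - 2*c*a^2 - S) :
    -((T - t) * P) ≤ T * (3*c*a^2 + S + c⁻¹*b^2) := by
  have key : 0 ≤ c * a^2 + 2*a*b + c⁻¹ * b^2 := by
    have h2 : c * a^2 + 2*a*b + c⁻¹ * b^2 = (c*a + b)^2 / c := by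
      field_simp
      ring
    rw [h2]
    positivity
  have hple : -P ≤ 3*c*a^2 + S + c⁻¹*b^2 := by rw [hP]; linarith
  have hQ : 0 ≤ 3*c*a^2 + S + c⁻¹*b^2 := by
    have q1 : 0 ≤ c⁻¹ * b^2 := mul_nonneg (inv_nonneg.mpr hc.le) (sq_nonneg b)
    have q2 : 0 ≤ 3*c*a^2 := by positivity
    linarith
  rcases le_total P 0 with h | h
  · have m1 : (T - t) * (-P) ≤ T * (-P) :=
      mul_le_mul_of_nonneg_right (by linarith) (by linarith)
    have m2 : T * (-P) ≤ T * (3*c*a^2 + S + c⁻¹*b^2) :=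
      mul_le_mul_of_nonneg_left hple hT0
    nlinarith
  · have m1 : 0 ≤ (T - t) * P := mul_nonneg (by linarith) h
    have m2 : 0 ≤ T * (3*c*a^2 + S + c⁻¹*b^2) := mul_nonneg hT0 hQ
    linarith

lemma final_arith (T E0 A R1 R2 R3 : ℝ) (hT : 0 < T)
    (h1 : T * E0 ≤ A + T * (R1 + R2 + R3)) :
    E0 ≤ 1/T * A + R1 + R2 + R3 := by
  have h2 : E0 ≤ (A + T*(R1+R2+R3))/T := by
    rw [le_div_iff₀ hT]
    nlinarith
  have h3 : (A + T*(R1+R2+R3))/T = 1/T*A + R1 + R2 + R3 := by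
    field_simp
    ring
  linarith

theorem stmt6 (N : ℕ) (hN : 0 < N) (T : ℝ) (hT : 0 < T) (α : ℝ) (hα : (N : ℝ) / 2 < α)
    (ℓ : Fin N → ℝ) (hℓ : ∀ j, 0 < ℓ j) (u : Fin N → ℝ → ℝ → ℝ)
    (hu : ∀ j, ContDiff ℝ (⊤ : ℕ∞) (fun p : ℝ × ℝ => u j p.1 p.2))
    (hpde : ∀ j, ∀ t ∈ Set.Icc (0:ℝ) T, ∀ x ∈ Set.Icc (0:ℝ) (ℓ j),
      deriv (fun τ => u j τ x) t + deriv (u j t) x + iteratedDeriv 3 (u j t) x = 0)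
    (hcont : ∀ j k, ∀ t ∈ Set.Icc (0:ℝ) T, u j t 0 = u k t 0)
    (hext : ∀ j, ∀ t ∈ Set.Icc (0:ℝ) T, u j t (ℓ j) = 0 ∧ deriv (u j t) (ℓ j) = 0)
    (g : ℝ → ℝ)
    (hnode : ∀ t ∈ Set.Icc (0:ℝ) T, ∑ j, iteratedDeriv 2 (u j t) 0 = -α * u ⟨0, hN⟩ t 0 + g t) :
    (∑ j, ∫ x in (0:ℝ)..(ℓ j), (u j 0 x)^2)
      ≤ (1/T) * (∫ t in (0:ℝ)..T, ∑ j, ∫ x in (0:ℝ)..(ℓ j), (u j t x)^2)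
        + 3 * (α - (N : ℝ)/2) * (∫ t in (0:ℝ)..T, (u ⟨0, hN⟩ t 0)^2)
        + (∑ j, ∫ t in (0:ℝ)..T, (deriv (u j t) 0)^2)
        + (α - (N : ℝ)/2)⁻¹ * ∫ t in (0:ℝ)..T, (g t)^2 := by
  have hT0 : (0:ℝ) ≤ T := hT.le
  set c : ℝ := α - (N:ℝ)/2 with hc_def
  have hc : 0 < c := by rw [hc_def]; linarith
  -- continuity facts
  have hFc : ∀ j, Continuous fun p : ℝ × ℝ => u j p.1 p.2 := fun j => (hu j).continuous
  have hUxc : ∀ j, Continuous (UXof (u j)) := fun j => (pdx_contDiff (hu j)).continuous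
  have hUxxc : ∀ j, Continuous (UXXof (u j)) :=
    fun j => (pdx_contDiff (pdx_contDiff (hu j))).continuous
  have hst : Continuous (fun s : ℝ => ((s, (0:ℝ)) : ℝ × ℝ)) :=
    continuous_id.prodMk continuous_const
  have hu0c : Continuous fun t : ℝ => u ⟨0, hN⟩ t 0 := (hFc ⟨0, hN⟩).comp hst
  have hujc : ∀ j, Continuous fun t : ℝ => u j t 0 := fun j => (hFc j).comp hst
  have hUxc0 : ∀ j, Continuous fun t : ℝ => UXof (u j) (t, 0) := fun j => (hUxc j).comp hst
  have hUxxc0 : ∀ j, Continuous fun t : ℝ => UXXof (u j) (t, 0) := fun j => (hUxxc j).comp hst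
  have hφc : ∀ j, Continuous (phiOf (u j)) := by
    intro j
    have : Continuous fun s : ℝ =>
        (u j s 0)^2 + 2*(u j s 0 * UXXof (u j) (s, 0)) - (UXof (u j) (s, 0))^2 :=
      (((hujc j).pow 2).add (continuous_const.mul ((hujc j).mul (hUxxc0 j)))).sub
        ((hUxc0 j).pow 2)
    exact this
  have hΦc : Continuous (fun s : ℝ => ∑ j, phiOf (u j) s) :=
    continuous_finset_sum _ fun j _ => hφc j
  -- per edge identity
  have hedge : ∀ j, ∀ t ∈ Icc (0:ℝ) T,
      (∫ x in (0:ℝ)..(ℓ j), (u j t x)^2) - (∫ x in (0:ℝ)..(ℓ j), (u j 0 x)^2)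
        = ∫ s in (0:ℝ)..t, phiOf (u j) s := by
    intro j t ht
    refine edge_identity (fun p : ℝ × ℝ => u j p.1 p.2) (hu j) T (ℓ j) (hℓ j) ?_ ?_ t ht
    · intro s hs x hx
      have h := hpde j s hs x hx
      rw [trans_dt (u j) (hu j) s x, trans_deriv (u j) (hu j) s x,
        trans_it3 (u j) (hu j) s x] at h
      exact h
    · intro s hs
      obtain ⟨h1, h2⟩ := hext j s hs
      refine ⟨h1, ?_⟩
      show UXof (u j) (s, ℓ j) = 0
      rw [← trans_deriv (u j) (hu j) s (ℓ j)]
      exact h2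
  -- global energy identity
  have hA : ∀ t ∈ Icc (0:ℝ) T,
      (∑ j, ∫ x in (0:ℝ)..(ℓ j), (u j t x)^2)
        = (∑ j, ∫ x in (0:ℝ)..(ℓ j), (u j 0 x)^2)
          + ∫ s in (0:ℝ)..t, ∑ j, phiOf (u j) s := by
    intro t ht
    rw [intervalIntegral.integral_finset_sum
      (fun j _ => (hφc j).intervalIntegrable 0 t), ← Finset.sum_add_distrib]
    refine Finset.sum_congr rfl fun j _ => ?_
    have h := hedge j t ht
    linarith
  -- primitive of Φ is continuous
  have hHc : Continuous fun t : ℝ => ∫ s in (0:ℝ)..t, ∑ j, phiOf (u j) s := by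
    rw [continuous_iff_continuousAt]
    exact fun t => ((hΦc.integral_hasStrictDerivAt 0 t).hasDerivAt).continuousAt
  -- integrate the energy identity over [0,T]
  have hI1 : (∫ t in (0:ℝ)..T, ∑ j, ∫ x in (0:ℝ)..(ℓ j), (u j t x)^2)
      = T * (∑ j, ∫ x in (0:ℝ)..(ℓ j), (u j 0 x)^2)
        + ∫ t in (0:ℝ)..T, (T - t) * (∑ j, phiOf (u j) t) := by
    have hcg : (∫ t in (0:ℝ)..T, ∑ j, ∫ x in (0:ℝ)..(ℓ j), (u j t x)^2)
        = ∫ t in (0:ℝ)..T,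
            ((∑ j, ∫ x in (0:ℝ)..(ℓ j), (u j 0 x)^2)
              + ∫ s in (0:ℝ)..t, ∑ j, phiOf (u j) s) := by
      apply intervalIntegral.integral_congr
      intro t ht'
      rw [uIcc_of_le hT0] at ht'
      exact hA t ht'
    rw [hcg, intervalIntegral.integral_add (intervalIntegrable_const)
      (hHc.intervalIntegrable 0 T), intervalIntegral.integral_const,
      weight_lemma _ hΦc T]
    simp [smul_eq_mul]
  -- pointwise bound
  have hptw : ∀ t ∈ Icc (0:ℝ) T,
      -((T - t) * (∑ j, phiOf (u j) t))
        ≤ T * (3 * c * (u ⟨0, hN⟩ t 0)^2 + (∑ j, (UXof (u j) (t, 0))^2)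
            + c⁻¹ * ((∑ j, UXXof (u j) (t, 0)) + α * u ⟨0, hN⟩ t 0)^2) := by
    intro t ht
    have hS : (0:ℝ) ≤ ∑ j, (UXof (u j) (t, 0))^2 :=
      Finset.sum_nonneg fun j _ => sq_nonneg _
    have hφj : ∀ j : Fin N, phiOf (u j) t
        = (u ⟨0, hN⟩ t 0)^2 + 2*(u ⟨0, hN⟩ t 0 * UXXof (u j) (t, 0))
          - (UXof (u j) (t, 0))^2 := by
      intro j
      simp only [phiOf]
      rw [hcont j ⟨0, hN⟩ t ht]
    have hsplit : (∑ j, phiOf (u j) t)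
        = (N:ℝ) * (u ⟨0, hN⟩ t 0)^2
          + 2 * (u ⟨0, hN⟩ t 0) * (∑ j, UXXof (u j) (t, 0))
          - (∑ j, (UXof (u j) (t, 0))^2) := by
      rw [Finset.sum_congr rfl fun j _ => hφj j]
      rw [Finset.sum_sub_distrib, Finset.sum_add_distrib, Finset.sum_const,
        Finset.card_univ, Fintype.card_fin, nsmul_eq_mul, Finset.mul_sum]
      simp only [mul_assoc]
    refine ptwise_bound T t c (u ⟨0, hN⟩ t 0)
      ((∑ j, UXXof (u j) (t, 0)) + α * u ⟨0, hN⟩ t 0)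
      (∑ j, (UXof (u j) (t, 0))^2) _ hT0 ht.1 ht.2 hc hS ?_
    rw [hsplit, hc_def]
    push_cast
    ring
  -- integrate the pointwise bound
  have cb : Continuous fun t : ℝ => (∑ j, UXXof (u j) (t, 0)) + α * u ⟨0, hN⟩ t 0 :=
    (continuous_finset_sum _ fun j _ => hUxxc0 j).add (continuous_const.mul hu0c)
  have cRHS : Continuous fun t : ℝ =>
      T * (3 * c * (u ⟨0, hN⟩ t 0)^2 + (∑ j, (UXof (u j) (t, 0))^2)
          + c⁻¹ * ((∑ j, UXXof (u j) (t, 0)) + α * u ⟨0, hN⟩ t 0)^2) :=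
    continuous_const.mul
      (((continuous_const.mul (hu0c.pow 2)).add
        (continuous_finset_sum _ fun j _ => (hUxc0 j).pow 2)).add
        (continuous_const.mul (cb.pow 2)))
  have cLHS : Continuous fun t : ℝ => -((T - t) * (∑ j, phiOf (u j) t)) :=
    (((continuous_const.sub continuous_id).mul hΦc)).neg
  have hmono := intervalIntegral.integral_mono_on hT0
    (cLHS.intervalIntegrable (μ := MeasureTheory.volume) 0 T)
    (cRHS.intervalIntegrable (μ := MeasureTheory.volume) 0 T) hptw
  rw [intervalIntegral.integral_neg] at hmono
  -- compute the RHS integral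
  have hRHSint : (∫ t in (0:ℝ)..T,
      T * (3 * c * (u ⟨0, hN⟩ t 0)^2 + (∑ j, (UXof (u j) (t, 0))^2)
          + c⁻¹ * ((∑ j, UXXof (u j) (t, 0)) + α * u ⟨0, hN⟩ t 0)^2))
      = T * (3 * c * (∫ t in (0:ℝ)..T, (u ⟨0, hN⟩ t 0)^2)
          + (∑ j, ∫ t in (0:ℝ)..T, (UXof (u j) (t, 0))^2)
          + c⁻¹ * (∫ t in (0:ℝ)..T, (g t)^2)) := by
    have hgG : (∫ t in (0:ℝ)..T, ((∑ j, UXXof (u j) (t, 0)) + α * u ⟨0, hN⟩ t 0)^2)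
        = ∫ t in (0:ℝ)..T, (g t)^2 := by
      apply intervalIntegral.integral_congr
      intro t ht'
      rw [uIcc_of_le hT0] at ht'
      have h := hnode t ht'
      have h2 : ∑ j, iteratedDeriv 2 (u j t) 0 = ∑ j, UXXof (u j) (t, 0) :=
        Finset.sum_congr rfl fun j _ => trans_it2 (u j) (hu j) t 0
      rw [h2] at h
      simp only [h]
      ring_nf
    rw [intervalIntegral.integral_const_mul]
    congr 1
    rw [intervalIntegral.integral_add
      (f := fun t => 3 * c * (u ⟨0, hN⟩ t 0)^2 + (∑ j, (UXof (u j) (t, 0))^2))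
      (g := fun t => c⁻¹ * ((∑ j, UXXof (u j) (t, 0)) + α * u ⟨0, hN⟩ t 0)^2)
      (((continuous_const.mul (hu0c.pow 2)).add
        (continuous_finset_sum _ fun j _ => (hUxc0 j).pow 2)).intervalIntegrable 0 T)
      ((continuous_const.mul (cb.pow 2)).intervalIntegrable 0 T),
      intervalIntegral.integral_add
      (f := fun t => 3 * c * (u ⟨0, hN⟩ t 0)^2) (g := fun t => ∑ j, (UXof (u j) (t, 0))^2)
      ((continuous_const.mul (hu0c.pow 2)).intervalIntegrable 0 T)
      ((continuous_finset_sum _ fun j _ => (hUxc0 j).pow 2).intervalIntegrable 0 T),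
      intervalIntegral.integral_const_mul, intervalIntegral.integral_const_mul,
      intervalIntegral.integral_finset_sum (f := fun j t => (UXof (u j) (t, 0))^2)
        (fun j _ => ((hUxc0 j).pow 2).intervalIntegrable 0 T), hgG]
  rw [hRHSint] at hmono
  -- rewrite the deriv sums in the goal
  have hI2 : (∑ j, ∫ t in (0:ℝ)..T, (deriv (u j t) 0)^2)
      = ∑ j, ∫ t in (0:ℝ)..T, (UXof (u j) (t, 0))^2 := by
    refine Finset.sum_congr rfl fun j _ => ?_
    apply intervalIntegral.integral_congr
    intro t _
    simp only [trans_deriv (u j) (hu j) t 0]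
  rw [hI2]
  refine final_arith T _ _ _ _ _ hT ?_
  linarith [hI1, hmono]
end

section
/- Let λ_1, λ_2 ∈ ℂ and let z_1 ∈ H^3(0,ℓ_1), z_2 ∈ H^3(0,ℓ_2) be nonzero solutions of λ_i z_i + z_i' + z_i''' = 0 with z_i(0) = z_i'(0) = 0 and z_i(ℓ_i) = z_i'(ℓ_i) = 0 (i = 1,2). Then z_1''(0) ≠ 0 and z_2''(0) ≠ 0, and the N-tuple y = (z_2''(0) z_1, -z_1''(0) z_2, 0, ..., 0) is nonzero, each component solves its ODE with the same boundary conditions, and Σ_{i=1}^N y_i''(0) = 0. -/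
/-!
A solution of `λ z + z' + z''' = 0` is determined by its jet `(z, z', z'')` at `0`, since the jet
solves a linear first-order system; so if `z(0) = z'(0) = 0` and `z ≢ 0`, then `z''(0) ≠ 0`.
Hence the two nonzero second derivatives can be used as weights making the sum of the
`y_i''(0)` cancel, while each `y_i` is a constant multiple of a solution.
-/

open Set

theorem eqOn_zero_of_hasDerivWithinAt_clm {E : Type*} [NormedAddCommGroup E] [NormedSpace ℝ E]
    {𝕜 : Type*} [NontriviallyNormedField 𝕜] [NormedSpace 𝕜 E]
    (L : E →L[𝕜] E) {f : ℝ → E} {a b : ℝ} (hf : ContinuousOn f (Icc a b))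
    (hf' : ∀ t ∈ Ico a b, HasDerivWithinAt f (L (f t)) (Ici t) t) (ha : f a = 0) :
    EqOn f 0 (Icc a b) :=
  ODE_solution_unique (v := fun _ => L) (fun _ => L.lipschitz) hf hf' continuousOn_const
    (fun t _ => by simp only [Pi.zero_apply, map_zero]; exact hasDerivWithinAt_const _ _ _) ha

theorem hasDerivAt_iteratedDeriv {𝕜 F : Type*} [NontriviallyNormedField 𝕜]
    [NormedAddCommGroup F] [NormedSpace 𝕜 F] {n : WithTop ℕ∞} {f : 𝕜 → F} (hf : ContDiff 𝕜 n f)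
    {m : ℕ} (hm : m < n) (x : 𝕜) :
    HasDerivAt (iteratedDeriv m f) (iteratedDeriv (m + 1) f x) x := by
  rw [iteratedDeriv_succ]
  exact (hf.differentiable_iteratedDeriv m hm x).hasDerivAt

def IsLinearKdVSolution (lam : ℂ) (ℓ : ℝ) (z : ℝ → ℂ) : Prop :=
  ∀ x ∈ Icc (0 : ℝ) ℓ, lam * z x + deriv z x + iteratedDeriv 3 z x = 0

def HasZeroBoundaryData (ℓ : ℝ) (z : ℝ → ℂ) : Prop :=
  z 0 = 0 ∧ deriv z 0 = 0 ∧ z ℓ = 0 ∧ deriv z ℓ = 0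

/-- The companion matrix of `λ z + z' + z''' = 0`, acting on jets `(z, z', z'')`. -/
noncomputable def linearKdVCompanion (lam : ℂ) : ℂ × ℂ × ℂ →L[ℂ] ℂ × ℂ × ℂ :=
  LinearMap.toContinuousLinearMap
    { toFun := fun p => (p.2.1, p.2.2, -(lam * p.1 + p.2.1))
      map_add' := fun p q => by ext <;> simp; ring
      map_smul' := fun c p => by ext <;> simp; ring }

theorem linearKdVCompanion_apply (lam : ℂ) (p : ℂ × ℂ × ℂ) :
    linearKdVCompanion lam p = (p.2.1, p.2.2, -(lam * p.1 + p.2.1)) := rfl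

theorem IsLinearKdVSolution.eqOn_zero {lam : ℂ} {ℓ : ℝ} {z : ℝ → ℂ}
    (hsol : IsLinearKdVSolution lam ℓ z) (hz : ContDiff ℝ 3 z)
    (h₀ : z 0 = 0) (h₁ : deriv z 0 = 0) (h₂ : iteratedDeriv 2 z 0 = 0) :
    EqOn z 0 (Icc 0 ℓ) := by
  set jet : ℝ → ℂ × ℂ × ℂ := fun t => (z t, deriv z t, iteratedDeriv 2 z t)
  have hjet (t : ℝ) :
      HasDerivAt jet (deriv z t, iteratedDeriv 2 z t, iteratedDeriv 3 z t) t := by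
    have hd₀ := hasDerivAt_iteratedDeriv hz (m := 0) (by norm_num) t
    have hd₁ := hasDerivAt_iteratedDeriv hz (m := 1) (by norm_num) t
    have hd₂ := hasDerivAt_iteratedDeriv hz (m := 2) (by norm_num) t
    simp only [iteratedDeriv_zero, iteratedDeriv_one, zero_add] at hd₀ hd₁
    exact hd₀.prodMk (hd₁.prodMk hd₂)
  have hjet_eq (t : ℝ) (ht : t ∈ Icc 0 ℓ) :
      linearKdVCompanion lam (jet t) = (deriv z t, iteratedDeriv 2 z t, iteratedDeriv 3 z t) := by
    rw [linearKdVCompanion_apply, eq_neg_of_add_eq_zero_right (hsol t ht)]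
  have hzero : EqOn jet 0 (Icc 0 ℓ) :=
    eqOn_zero_of_hasDerivWithinAt_clm (linearKdVCompanion lam)
      (HasDerivAt.continuousOn fun t _ => hjet t)
      (fun t ht => hjet_eq t (Ico_subset_Icc_self ht) ▸ (hjet t).hasDerivWithinAt)
      (by simp [jet, h₀, h₁, h₂])
  exact fun t ht => congrArg Prod.fst (hzero ht)

theorem IsLinearKdVSolution.iteratedDeriv_two_ne_zero {lam : ℂ} {ℓ : ℝ} {z : ℝ → ℂ}
    (hsol : IsLinearKdVSolution lam ℓ z) (hz : ContDiff ℝ 3 z)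
    (h₀ : z 0 = 0) (h₁ : deriv z 0 = 0) (hne : ∃ x ∈ Icc (0 : ℝ) ℓ, z x ≠ 0) :
    iteratedDeriv 2 z 0 ≠ 0 := fun h₂ =>
  let ⟨_, hx, hzx⟩ := hne
  hzx (hsol.eqOn_zero hz h₀ h₁ h₂ hx)

theorem IsLinearKdVSolution.const_mul {lam : ℂ} {ℓ : ℝ} {z : ℝ → ℂ}
    (hsol : IsLinearKdVSolution lam ℓ z) (c : ℂ) :
    IsLinearKdVSolution lam ℓ (fun x => c * z x) := fun x hx => by
  rw [deriv_const_mul_field, iteratedDeriv_const_mul_field]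
  linear_combination c * hsol x hx

theorem isLinearKdVSolution_zero (lam : ℂ) (ℓ : ℝ) : IsLinearKdVSolution lam ℓ (fun _ => 0) :=
  fun _ _ => by simp

theorem HasZeroBoundaryData.const_mul {ℓ : ℝ} {z : ℝ → ℂ} (hbc : HasZeroBoundaryData ℓ z)
    (c : ℂ) : HasZeroBoundaryData ℓ (fun x => c * z x) := by
  obtain ⟨h₀, h₀', hℓ, hℓ'⟩ := hbc
  simp [HasZeroBoundaryData, deriv_const_mul_field, h₀, h₀', hℓ, hℓ']

theorem hasZeroBoundaryData_zero (ℓ : ℝ) : HasZeroBoundaryData ℓ (fun _ => 0) := by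
  simp [HasZeroBoundaryData]

theorem stmt12 (N : ℕ) (hN : 2 ≤ N) (ℓ : Fin N → ℝ)
    (lam₁ lam₂ : ℂ) (z₁ z₂ : ℝ → ℂ)
    (hz₁ : ContDiff ℝ 3 z₁) (hz₂ : ContDiff ℝ 3 z₂)
    (hz₁ne : ∃ x ∈ Set.Icc (0:ℝ) (ℓ ⟨0, by omega⟩), z₁ x ≠ 0)
    (hz₂ne : ∃ x ∈ Set.Icc (0:ℝ) (ℓ ⟨1, by omega⟩), z₂ x ≠ 0)
    (hode₁ : ∀ x ∈ Set.Icc (0:ℝ) (ℓ ⟨0, by omega⟩),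
      lam₁ * z₁ x + deriv z₁ x + iteratedDeriv 3 z₁ x = 0)
    (hode₂ : ∀ x ∈ Set.Icc (0:ℝ) (ℓ ⟨1, by omega⟩),
      lam₂ * z₂ x + deriv z₂ x + iteratedDeriv 3 z₂ x = 0)
    (hbc₁ : z₁ 0 = 0 ∧ deriv z₁ 0 = 0 ∧ z₁ (ℓ ⟨0, by omega⟩) = 0 ∧ deriv z₁ (ℓ ⟨0, by omega⟩) = 0)
    (hbc₂ : z₂ 0 = 0 ∧ deriv z₂ 0 = 0 ∧ z₂ (ℓ ⟨1, by omega⟩) = 0 ∧ deriv z₂ (ℓ ⟨1, by omega⟩) = 0) :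
    let y : Fin N → ℝ → ℂ := fun i x =>
      if (i : ℕ) = 0 then iteratedDeriv 2 z₂ 0 * z₁ x
      else if (i : ℕ) = 1 then -(iteratedDeriv 2 z₁ 0) * z₂ x
      else 0
    iteratedDeriv 2 z₁ 0 ≠ 0 ∧ iteratedDeriv 2 z₂ 0 ≠ 0 ∧
    (∃ i, ∃ x ∈ Set.Icc (0:ℝ) (ℓ i), y i x ≠ 0) ∧
    (∀ i, ∃ mu : ℂ, ∀ x ∈ Set.Icc (0:ℝ) (ℓ i),
      mu * y i x + deriv (y i) x + iteratedDeriv 3 (y i) x = 0) ∧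
    (∀ i, y i 0 = 0 ∧ deriv (y i) 0 = 0 ∧ y i (ℓ i) = 0 ∧ deriv (y i) (ℓ i) = 0) ∧
    ∑ i, iteratedDeriv 2 (y i) 0 = 0 := by
  intro y
  have hc₁ := IsLinearKdVSolution.iteratedDeriv_two_ne_zero hode₁ hz₁ hbc₁.1 hbc₁.2.1 hz₁ne
  have hc₂ := IsLinearKdVSolution.iteratedDeriv_two_ne_zero hode₂ hz₂ hbc₂.1 hbc₂.2.1 hz₂ne
  have hy : ∀ i, ∃ mu, IsLinearKdVSolution mu (ℓ i) (y i) ∧ HasZeroBoundaryData (ℓ i) (y i) := by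
    rintro ⟨_ | _ | i, hi⟩
    · exact ⟨lam₁, IsLinearKdVSolution.const_mul hode₁ _, HasZeroBoundaryData.const_mul hbc₁ _⟩
    · exact ⟨lam₂, IsLinearKdVSolution.const_mul hode₂ _, HasZeroBoundaryData.const_mul hbc₂ _⟩
    · exact ⟨0, isLinearKdVSolution_zero _ _, hasZeroBoundaryData_zero _⟩
  refine ⟨hc₁, hc₂, ?_, fun i => (hy i).imp fun _ h => h.1, fun i => (hy i).elim fun _ h => h.2, ?_⟩
  · obtain ⟨x, hx, hzx⟩ := hz₁ne
    exact ⟨_, x, hx, mul_ne_zero hc₂ hzx⟩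
  · rw [Fintype.sum_eq_add ⟨0, by omega⟩ ⟨1, by omega⟩ (Fin.ne_of_val_ne zero_ne_one)]
    · simp only [y, ↓reduceIte, one_ne_zero, iteratedDeriv_const_mul_field, neg_mul,
        iteratedDeriv_fun_neg]
      ring
    · rintro ⟨_ | _ | i, hi⟩ h
      · simp at h
      · simp at h
      · simp [y]
end
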